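/- For every integer n ≥ 1, the n-th Pell number has the complex factorization P_n = ∏_{k=1}^{n−1} (2 − 2i·cos(kπ/n)), where i = √−1. -/

import Mathlib

/-!
The numbers `i ^ n * U_n(-i)` satisfy the Pell recurrence, so `P_{n+1} = i ^ n * U_n(-i)`.
Factoring the Chebyshev polynomial `U_n` over its real roots `cos ((k + 1) π / (n + 1))` and
writing `2 - 2 i c = 2 i (-i - c)` turns this into the product.
-/

/-- Pell numbers: `P 0 = 0`, `P 1 = 1`, `P (k+2) = 2 * P (k+1) + P k`. -/
def pell : ℕ → ℕ
  | 0 => 0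
  | 1 => 1
  | (k + 2) => 2 * pell (k + 1) + pell k

open Polynomial Polynomial.Chebyshev Real

theorem U_real_eq_prod_X_sub_C_cos (n : ℕ) :
    U ℝ n = C (2 ^ n) * ∏ k ∈ Finset.range n, (X - C (cos ((k + 1) * π / (n + 1)))) := by
  have hinj := (Finset.range n).nodup_map_iff_injOn.mp (roots_U_real_nodup n)
  have hcard : Multiset.card (U ℝ n).roots = (U ℝ n).natDegree := by
    rw [roots_U_real, natDegree_U_natCast, Finset.card_val, Finset.card_image_of_injOn hinj,
      Finset.card_range]
  conv_lhs => rw [← C_leadingCoeff_mul_prod_multiset_X_sub_C hcard]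
  rw [leadingCoeff_U_natCast, roots_U_real, Finset.image_val_of_injOn hinj, Multiset.map_map]
  rfl

theorem eval_U_eq_prod_sub_cos {A : Type*} [CommRing A] [Algebra ℝ A] (n : ℕ) (x : A) :
    (U A n).eval x =
      2 ^ n * ∏ k ∈ Finset.range n, (x - algebraMap ℝ A (cos ((k + 1) * π / (n + 1)))) := by
  rw [← aeval_U (R := ℝ), U_real_eq_prod_X_sub_C_cos]
  simp [map_prod, map_ofNat]

theorem pell_succ_eq_I_pow_mul_eval_U (n : ℕ) :
    (pell (n + 1) : ℂ) = Complex.I ^ n * (U ℂ n).eval (-Complex.I) := by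
  induction n using Nat.twoStepInduction with
  | zero => simp [pell]
  | one =>
    simp only [pell, Nat.cast_one, U_one, eval_mul, eval_X, eval_ofNat, pow_one]
    linear_combination 2 * Complex.I_sq
  | more n ih₁ ih₂ =>
    have hrec : pell (n + 3) = 2 * pell (n + 2) + pell (n + 1) := rfl
    rw [hrec, show ((n + 2 : ℕ) : ℤ) = n + 2 by push_cast; ring, U_add_two]
    push_cast at ih₁ ih₂ ⊢
    simp only [eval_sub, eval_mul, eval_X, eval_ofNat]
    linear_combination 2 * ih₂ + ih₁ + Complex.I ^ n *
      (2 * Complex.I * eval (-Complex.I) (U ℂ (n + 1)) + eval (-Complex.I) (U ℂ n)) * Complex.I_sq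

/-- For `n ≥ 1`, the `n`-th Pell number has the complex factorization
`P_n = ∏_{k=1}^{n-1} (2 - 2i·cos(kπ/n))`. -/
theorem pell_complex_factorization (n : ℕ) (hn : 1 ≤ n) :
    (pell n : ℂ) =
      ∏ k ∈ Finset.Icc 1 (n - 1),
        (2 - 2 * Complex.I * (Real.cos ((k : ℝ) * Real.pi / (n : ℝ)) : ℂ)) := by
  obtain ⟨m, rfl⟩ : ∃ m, n = m + 1 := ⟨n - 1, by omega⟩
  have hfactor (c : ℂ) : 2 - 2 * Complex.I * c = 2 * Complex.I * (-Complex.I - c) := by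
    linear_combination 2 * Complex.I_sq
  rw [pell_succ_eq_I_pow_mul_eval_U, eval_U_eq_prod_sub_cos, Nat.add_sub_cancel,
    ← Finset.Ico_add_one_right_eq_Icc, Finset.prod_Ico_eq_prod_range, Nat.add_sub_cancel]
  simp only [hfactor, Finset.prod_mul_distrib, Finset.prod_const, Finset.card_range]
  rw [Complex.coe_algebraMap, ← mul_assoc, mul_comm (Complex.I ^ m)]
  refine congrArg _ (Finset.prod_congr rfl fun k _ => ?_)
  push_cast
  ring_nf
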